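/- Let A be a real n×m matrix with n < m satisfying the URP and having orthonormal rows (A Aᵀ = I_n), let 1 ≤ n0 ≤ n, and let γ = γ_A(n0) (finite and positive). Let ε > 0, let s0 ∈ ℝ^m with k = ‖s0‖₀, let k′ be a real number with k < k′ < n0/(2+2γ), and let x ∈ ℝⁿ satisfy ‖A s0 − x‖ < ε. Set c = 2m/(2m + n0/(2+2γ) − k′), and suppose σ_J > 0 satisfies σ_J ≥ 2√m·‖A‖₂·ε/((1+γ)(k′−k)) > c·σ_J, where ‖A‖₂ is the spectral norm of A. If s_J ∈ S_x satisfies F_{γ,σ_J}(s_J) ≥ m − k′, then ‖s_J − s0‖ ≤ C·ε, where C = (4m/(c·(k′−k)·√(γ+1)) + 1)·‖A‖₂. -/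

import Mathlib

open Finset
open scoped BigOperators

noncomputable section

/-- Squared Euclidean norm of a vector. -/
def nsq {ι : Type*} [Fintype ι] (s : ι → ℝ) : ℝ := ∑ i, (s i) ^ 2

/-- The Unique Representation Property: every `n × n` submatrix of `A` is invertible. -/
def URP {n m : ℕ} (A : Matrix (Fin n) (Fin m) ℝ) : Prop :=
  ∀ g : Fin n → Fin m, Function.Injective g → IsUnit (A.submatrix id g)

/-- Number of nonzero components (the ℓ⁰ "norm"). -/
def l0 {ι : Type*} [Fintype ι] (s : ι → ℝ) : ℕ :=
  (Finset.univ.filter fun i => s i ≠ 0).card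

/-- Number of components with absolute value greater than σ. -/
def l0s {ι : Type*} [Fintype ι] (s : ι → ℝ) (σ : ℝ) : ℕ :=
  (Finset.univ.filter fun i => σ < |s i|).card

/-- The set of ratios ‖π_I(s)‖²/‖π_{Iᶜ}(s)‖² over index sets `I` with `|I| ≤ n0`
and nonzero null-space vectors `s`. -/
def gammaSet {n m : ℕ} (A : Matrix (Fin n) (Fin m) ℝ) (n0 : ℕ) : Set ℝ :=
  {r | ∃ (I : Finset (Fin m)) (s : Fin m → ℝ), I.card ≤ n0 ∧ A.mulVec s = 0 ∧ s ≠ 0 ∧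
    r = (∑ i ∈ I, (s i) ^ 2) / (∑ i ∈ Iᶜ, (s i) ^ 2)}

/-- γ_A(n0), the supremum of the above set of ratios. -/
def gammaA {n m : ℕ} (A : Matrix (Fin n) (Fin m) ℝ) (n0 : ℕ) : ℝ :=
  sSup (gammaSet A n0)

/-- Square of the largest singular value of a matrix (Rayleigh quotient form). -/
def sMaxSq {p q : Type*} [Fintype p] [Fintype q] (B : Matrix p q ℝ) : ℝ :=
  sSup {r | ∃ v : q → ℝ, nsq v = 1 ∧ r = nsq (B.mulVec v)}

/-- Square of the smallest singular value of a matrix with at least as many rows as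
columns (Rayleigh quotient form). -/
def sMinSq {p q : Type*} [Fintype p] [Fintype q] (B : Matrix p q ℝ) : ℝ :=
  sInf {r | ∃ v : q → ℝ, nsq v = 1 ∧ r = nsq (B.mulVec v)}

/-- The quadratic spline f_γ. -/
def fsp (γ u : ℝ) : ℝ :=
  if |u| ≤ 1 then 1 - u ^ 2 / (1 + γ)
  else if |u| ≤ 1 + γ then (|u| - γ - 1) ^ 2 / (γ ^ 2 + γ)
  else 0

/-- F_{γ,σ}(s) = Σ_i f_γ(s_i/σ). -/
def Fsp {m : ℕ} (γ σ : ℝ) (s : Fin m → ℝ) : ℝ := ∑ i, fsp γ (s i / σ)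

/-- The piecewise second derivative g_γ of f_γ. -/
def gsp (γ u : ℝ) : ℝ :=
  if |u| ≤ 1 then -2 / (1 + γ)
  else if |u| ≤ 1 + γ then 2 / (γ ^ 2 + γ)
  else 0

/-- The derivative f_γ′. -/
def fspDeriv (γ u : ℝ) : ℝ :=
  if |u| ≤ 1 then -2 * u / (1 + γ)
  else if |u| ≤ 1 + γ then 2 * (|u| - γ - 1) / (γ ^ 2 + γ) * Real.sign u
  else 0

/-- The gradient of F_{γ,σ}: its i-th component is (1/σ)·f_γ′(s_i/σ). -/
def gradF {m : ℕ} (γ σ : ℝ) (s : Fin m → ℝ) : Fin m → ℝ :=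
  fun i => fspDeriv γ (s i / σ) / σ

/-- The lower asymmetric restricted isometry constant δ_k^{min} of `A`. -/
def aricMin {n m : ℕ} (A : Matrix (Fin n) (Fin m) ℝ) (k : ℕ) : ℝ :=
  sInf {δ : ℝ | 0 ≤ δ ∧ ∀ s : Fin m → ℝ, l0 s ≤ k → (1 - δ) * nsq s ≤ nsq (A.mulVec s)}

end

/-! The spline constraint `F_{γ,σ}(s_J) ≥ m - k'` puts all but at most `(1+γ)k'` entries of
`s_J` into `[-σ, σ]`, with total energy there at most `(1+γ)σ²k'`. Together with the support of
`s₀` this gives an index set `I` with `|I| < n₀` off which `s₀` vanishes and `s_J` is small.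
Split `s_J - s₀ = ν + p` with `p = AᵀA(s_J - s₀)`, so `‖p‖ = ‖A(s_J - s₀)‖ < ε` by orthonormality
of the rows, and `Aν = 0`. The definition of `γ` gives `‖ν‖² ≤ (1+γ)‖ν_{Iᶜ}‖²` (URP excludes a
nonzero `ν` vanishing on `Iᶜ`), and `ν_{Iᶜ} = (s_J)_{Iᶜ} - p_{Iᶜ}` is bounded by the two estimates
above. Orthonormal rows also give `‖A‖₂ = 1`. -/

open Matrix

section Vectors

variable {ι : Type*}

theorem sqrt_sum_sq_eq_norm (F : Finset ι) (v : ι → ℝ) :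
    √(∑ i ∈ F, v i ^ 2) = ‖(WithLp.toLp 2 (fun i : F => v i) : EuclideanSpace ℝ F)‖ := by
  rw [EuclideanSpace.norm_eq, ← Finset.sum_coe_sort F]
  simp

theorem sqrt_sum_sq_add_le (F : Finset ι) (a b : ι → ℝ) :
    √(∑ i ∈ F, (a i + b i) ^ 2) ≤ √(∑ i ∈ F, a i ^ 2) + √(∑ i ∈ F, b i ^ 2) := by
  simpa only [sqrt_sum_sq_eq_norm, ← WithLp.toLp_add, Pi.add_def] using
    norm_add_le (WithLp.toLp 2 (fun i : F => a i) : EuclideanSpace ℝ F)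
      (WithLp.toLp 2 fun i : F => b i)

theorem sqrt_sum_sq_sub_le (F : Finset ι) (a b : ι → ℝ) :
    √(∑ i ∈ F, (a i - b i) ^ 2) ≤ √(∑ i ∈ F, a i ^ 2) + √(∑ i ∈ F, b i ^ 2) := by
  simpa only [sqrt_sum_sq_eq_norm, ← WithLp.toLp_sub, Pi.sub_def] using
    norm_sub_le (WithLp.toLp 2 (fun i : F => a i) : EuclideanSpace ℝ F)
      (WithLp.toLp 2 fun i : F => b i)

variable [Fintype ι]

theorem nsq_nonneg (s : ι → ℝ) : 0 ≤ nsq s :=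
  Finset.sum_nonneg fun _ _ => sq_nonneg _

theorem nsq_sub_comm (s t : ι → ℝ) : nsq (s - t) = nsq (t - s) := by
  simp only [nsq, Pi.sub_apply]
  exact Finset.sum_congr rfl fun _ _ => by ring

theorem nsq_eq_dotProduct (s : ι → ℝ) : nsq s = s ⬝ᵥ s := by
  simp [nsq, dotProduct, sq]

theorem exists_card_le_l0_add_l0s (s t : ι → ℝ) (σ : ℝ) :
    ∃ I : Finset ι, I.card ≤ l0 s + l0s t σ ∧ (∀ i ∉ I, s i = 0) ∧ ∀ i ∉ I, |t i| ≤ σ := by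
  classical
  exact ⟨_, Finset.card_union_le _ _, fun i hi => by simp_all, fun i hi => by simp_all⟩

end Vectors

section OrthonormalRows

variable {p q : Type*} [Fintype p] [Fintype q] [DecidableEq p] {B : Matrix p q ℝ}

theorem nsq_transpose_mulVec (hB : B * Bᵀ = 1) (y : p → ℝ) : nsq (Bᵀ *ᵥ y) = nsq y := by
  rw [nsq_eq_dotProduct, nsq_eq_dotProduct, dotProduct_mulVec, mulVec_transpose,
    vecMul_vecMul, hB, vecMul_one]

theorem nsq_mulVec_le (hB : B * Bᵀ = 1) (v : q → ℝ) : nsq (B *ᵥ v) ≤ nsq v := by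
  have hcs : nsq (B *ᵥ v) ^ 2 ≤ nsq (B *ᵥ v) * nsq v := by
    calc nsq (B *ᵥ v) ^ 2 = ((Bᵀ *ᵥ (B *ᵥ v)) ⬝ᵥ v) ^ 2 := by
          rw [nsq_eq_dotProduct, dotProduct_mulVec, mulVec_transpose]
      _ ≤ nsq (Bᵀ *ᵥ (B *ᵥ v)) * nsq v := Finset.sum_mul_sq_le_sq_mul_sq _ _ _
      _ = nsq (B *ᵥ v) * nsq v := by rw [nsq_transpose_mulVec hB]
  nlinarith [nsq_nonneg (B *ᵥ v), nsq_nonneg v]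

theorem sMaxSq_eq_one [Nonempty p] (hB : B * Bᵀ = 1) : sMaxSq B = 1 := by
  have hle : ∀ r ∈ {r | ∃ v : q → ℝ, nsq v = 1 ∧ r = nsq (B *ᵥ v)}, r ≤ 1 := by
    rintro r ⟨v, hv, rfl⟩
    exact hv ▸ nsq_mulVec_le hB v
  obtain ⟨i⟩ := ‹Nonempty p›
  have hy : nsq (Pi.single i 1 : p → ℝ) = 1 := by simp [nsq, Pi.single_apply]
  have hmem : (1 : ℝ) ∈ {r | ∃ v : q → ℝ, nsq v = 1 ∧ r = nsq (B *ᵥ v)} :=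
    ⟨Bᵀ *ᵥ Pi.single i 1, by rw [nsq_transpose_mulVec hB, hy], by
      rw [mulVec_mulVec, hB, one_mulVec, hy]⟩
  exact le_antisymm (csSup_le ⟨1, hmem⟩ hle) (le_csSup ⟨1, hle⟩ hmem)

end OrthonormalRows

section NullSpace

variable {n m : ℕ} {A : Matrix (Fin n) (Fin m) ℝ} {n0 : ℕ}

theorem URP.eq_zero_of_mulVec_eq_zero (hA : URP A) (hnm : n ≤ m) {s : Fin m → ℝ}
    (hs : A *ᵥ s = 0) {I : Finset (Fin m)} (hI : I.card ≤ n) (hsI : ∀ i ∉ I, s i = 0) :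
    s = 0 := by
  obtain ⟨J, hIJ, hJ⟩ := Finset.exists_superset_card_eq hI (by simpa using hnm)
  set g := J.orderEmbOfFin hJ
  have hsJ : ∀ i ∉ J, s i = 0 := fun i hi => hsI i (fun h => hi (hIJ h))
  have hsub : A.submatrix id g *ᵥ (s ∘ g) = 0 := by
    ext r
    rw [← congrFun hs r]
    simp only [mulVec, dotProduct, submatrix_apply, id, Function.comp_apply]
    rw [← Finset.sum_subset (Finset.subset_univ J) fun i _ hi => by rw [hsJ i hi, mul_zero],
      ← Finset.map_orderEmbOfFin_univ J hJ, Finset.sum_map]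
    rfl
  have hsg : s ∘ g = 0 :=
    Matrix.eq_zero_of_mulVec_eq_zero ((isUnit_iff_isUnit_det _).mp (hA g g.injective)).ne_zero hsub
  ext i
  by_cases hi : i ∈ J
  · obtain ⟨t, rfl⟩ : i ∈ Set.range g := by rwa [Finset.range_orderEmbOfFin]
    exact congrFun hsg t
  · exact hsJ i hi

theorem nsq_le_one_add_gammaA_mul (hA : URP A) (hnm : n ≤ m) (hn0 : n0 ≤ n)
    (hbdd : BddAbove (gammaSet A n0)) {ν : Fin m → ℝ} (hν : A *ᵥ ν = 0)
    {I : Finset (Fin m)} (hI : I.card ≤ n0) :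
    nsq ν ≤ (1 + gammaA A n0) * ∑ i ∈ Iᶜ, ν i ^ 2 := by
  by_cases hν0 : ν = 0
  · simp [hν0, nsq]
  have hIc : 0 < ∑ i ∈ Iᶜ, ν i ^ 2 := by
    refine (Finset.sum_nonneg fun i _ => sq_nonneg (ν i)).lt_of_ne fun h => hν0 ?_
    refine hA.eq_zero_of_mulVec_eq_zero hnm hν (hI.trans hn0) fun i hi => ?_
    exact pow_eq_zero_iff two_ne_zero |>.mp <|
      (Finset.sum_eq_zero_iff_of_nonneg fun j _ => sq_nonneg (ν j)).mp h.symm i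
        (Finset.mem_compl.mpr hi)
  have hratio : (∑ i ∈ I, ν i ^ 2) / (∑ i ∈ Iᶜ, ν i ^ 2) ≤ gammaA A n0 :=
    le_csSup hbdd ⟨I, ν, hI, hν, hν0, rfl⟩
  rw [div_le_iff₀ hIc] at hratio
  rw [nsq, ← Finset.sum_add_sum_compl I]
  linarith

theorem sqrt_nsq_sub_le_of_compl_le (hA : URP A) (horth : A * Aᵀ = 1) (hnm : n ≤ m)
    (hn0 : n0 ≤ n) (hbdd : BddAbove (gammaSet A n0)) {I : Finset (Fin m)} (hI : I.card ≤ n0)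
    {s₀ s : Fin m → ℝ} (hs₀ : ∀ i ∉ I, s₀ i = 0) {B ε : ℝ}
    (hs : √(∑ i ∈ Iᶜ, s i ^ 2) ≤ B) (hε : √(nsq (A *ᵥ (s - s₀))) ≤ ε) :
    √(nsq (s - s₀)) ≤ √(1 + gammaA A n0) * (B + ε) + ε := by
  set d := s - s₀
  set p := Aᵀ *ᵥ (A *ᵥ d)
  have hp : √(nsq p) ≤ ε := by rwa [nsq_transpose_mulVec horth]
  have hν : A *ᵥ (d - p) = 0 := by
    rw [mulVec_sub, mulVec_mulVec, horth, one_mulVec, sub_self]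
  have hνIc : √(∑ i ∈ Iᶜ, (d - p) i ^ 2) ≤ B + ε := by
    calc √(∑ i ∈ Iᶜ, (d - p) i ^ 2) = √(∑ i ∈ Iᶜ, (s i - p i) ^ 2) := by
          refine congrArg _ (Finset.sum_congr rfl fun i hi => ?_)
          simp [d, hs₀ i (Finset.mem_compl.mp hi)]
      _ ≤ √(∑ i ∈ Iᶜ, s i ^ 2) + √(∑ i ∈ Iᶜ, p i ^ 2) := sqrt_sum_sq_sub_le _ _ _
      _ ≤ B + ε := by
          refine add_le_add hs ((Real.sqrt_le_sqrt ?_).trans hp)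
          exact Finset.sum_le_univ_sum_of_nonneg fun i => sq_nonneg (p i)
  have hνle : √(nsq (d - p)) ≤ √(1 + gammaA A n0) * (B + ε) := by
    calc √(nsq (d - p)) ≤ √((1 + gammaA A n0) * ∑ i ∈ Iᶜ, (d - p) i ^ 2) :=
          Real.sqrt_le_sqrt (nsq_le_one_add_gammaA_mul hA hnm hn0 hbdd hν hI)
      _ = √(1 + gammaA A n0) * √(∑ i ∈ Iᶜ, (d - p) i ^ 2) :=
          Real.sqrt_mul' _ (Finset.sum_nonneg fun i _ => sq_nonneg _)
      _ ≤ √(1 + gammaA A n0) * (B + ε) := by gcongr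
  calc √(nsq d) = √(∑ i, ((d - p) i + p i) ^ 2) := by simp [nsq]
    _ ≤ √(nsq (d - p)) + √(nsq p) := sqrt_sum_sq_add_le _ _ _
    _ ≤ √(1 + gammaA A n0) * (B + ε) + ε := add_le_add hνle hp

end NullSpace

section Spline

variable {γ : ℝ}

theorem one_sub_fsp_nonneg (hγ : 0 ≤ γ) (u : ℝ) : 0 ≤ 1 - fsp γ u := by
  unfold fsp
  split_ifs with h1 h2
  · have : 0 ≤ u ^ 2 / (1 + γ) := by positivity
    linarith
  · have h1 := not_le.mp h1
    rw [sub_nonneg, div_le_one (by nlinarith)]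
    nlinarith
  · norm_num

theorem one_sub_fsp_of_abs_le_one (u : ℝ) (hu : |u| ≤ 1) : 1 - fsp γ u = u ^ 2 / (1 + γ) := by
  rw [fsp, if_pos hu]
  ring

theorem inv_one_add_le_one_sub_fsp (hγ : 0 ≤ γ) {u : ℝ} (hu : 1 < |u|) :
    (1 + γ)⁻¹ ≤ 1 - fsp γ u := by
  rw [fsp, if_neg hu.not_ge]
  split_ifs with h
  · have hγ0 : 0 < γ := by linarith
    have hsq : (|u| - γ - 1) ^ 2 ≤ γ ^ 2 := by nlinarith
    calc (1 + γ)⁻¹ = 1 - γ ^ 2 / (γ ^ 2 + γ) := by field_simp; ring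
      _ ≤ 1 - (|u| - γ - 1) ^ 2 / (γ ^ 2 + γ) := by gcongr
  · rw [sub_zero]
    exact inv_le_one_of_one_le₀ (by linarith)

variable {m : ℕ} {σ : ℝ}

theorem sum_one_sub_fsp_le (hγ : 0 ≤ γ) (s : Fin m → ℝ) (F : Finset (Fin m)) :
    ∑ i ∈ F, (1 - fsp γ (s i / σ)) ≤ m - Fsp γ σ s := by
  calc ∑ i ∈ F, (1 - fsp γ (s i / σ)) ≤ ∑ i, (1 - fsp γ (s i / σ)) :=
        Finset.sum_le_univ_sum_of_nonneg fun i => one_sub_fsp_nonneg hγ _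
    _ = m - Fsp γ σ s := by simp [Fsp, Finset.sum_sub_distrib]

theorem l0s_le_mul_sub_Fsp (hγ : 0 ≤ γ) (hσ : 0 < σ) (s : Fin m → ℝ) :
    (l0s s σ : ℝ) ≤ (1 + γ) * (m - Fsp γ σ s) := by
  have hcard : (l0s s σ : ℝ) * (1 + γ)⁻¹ ≤ m - Fsp γ σ s := by
    calc (l0s s σ : ℝ) * (1 + γ)⁻¹
        = ∑ _i ∈ Finset.univ.filter fun i => σ < |s i|, (1 + γ)⁻¹ := by simp [l0s]
      _ ≤ ∑ i ∈ Finset.univ.filter fun i => σ < |s i|, (1 - fsp γ (s i / σ)) := by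
          refine Finset.sum_le_sum fun i hi => inv_one_add_le_one_sub_fsp hγ ?_
          rw [abs_div, abs_of_pos hσ, one_lt_div hσ]
          exact (Finset.mem_filter.mp hi).2
      _ ≤ m - Fsp γ σ s := sum_one_sub_fsp_le hγ s _
  rwa [← div_eq_mul_inv, div_le_iff₀ (by positivity), mul_comm] at hcard

theorem sum_sq_le_mul_sub_Fsp (hγ : 0 ≤ γ) (hσ : 0 < σ) {s : Fin m → ℝ} {F : Finset (Fin m)}
    (hF : ∀ i ∈ F, |s i| ≤ σ) :
    ∑ i ∈ F, s i ^ 2 ≤ (1 + γ) * σ ^ 2 * (m - Fsp γ σ s) := by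
  calc ∑ i ∈ F, s i ^ 2 = (1 + γ) * σ ^ 2 * ∑ i ∈ F, (1 - fsp γ (s i / σ)) := by
        rw [Finset.mul_sum]
        refine Finset.sum_congr rfl fun i hi => ?_
        rw [one_sub_fsp_of_abs_le_one]
        · field_simp
        · rw [abs_div, abs_of_pos hσ, div_le_one hσ]
          exact hF i hi
    _ ≤ (1 + γ) * σ ^ 2 * (m - Fsp γ σ s) :=
        mul_le_mul_of_nonneg_left (sum_one_sub_fsp_le hγ s F) (by positivity)

theorem exists_support_of_le_Fsp (hγ : 0 ≤ γ) (hσ : 0 < σ) {s : Fin m → ℝ} {k' : ℝ}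
    (hs : m - k' ≤ Fsp γ σ s) (s₀ : Fin m → ℝ) :
    ∃ I : Finset (Fin m), (I.card : ℝ) ≤ l0 s₀ + (1 + γ) * k' ∧ (∀ i ∉ I, s₀ i = 0) ∧
      ∑ i ∈ Iᶜ, s i ^ 2 ≤ (1 + γ) * σ ^ 2 * k' := by
  obtain ⟨I, hIcard, hs₀I, hsI⟩ := exists_card_le_l0_add_l0s s₀ s σ
  refine ⟨I, ?_, hs₀I, ?_⟩
  · have hl0s := l0s_le_mul_sub_Fsp hγ hσ s
    have hI : (I.card : ℝ) ≤ l0 s₀ + l0s s σ := by exact_mod_cast hIcard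
    nlinarith
  · refine (sum_sq_le_mul_sub_Fsp hγ hσ fun i hi => hsI i (Finset.mem_compl.mp hi)).trans ?_
    gcongr
    linarith

end Spline

-- The closing arithmetic, read with `g = 1 + γ`, `K = k' - k`, `M = m`.
theorem sqrt_mul_sqrt_add_le_div {g K k' c σ ε M : ℝ} (hg : 0 < g) (hK : 0 < K) (hKk' : K ≤ k')
    (hc : 0 < c) (hc1 : c ≤ 1) (hσ : 0 ≤ σ) (hε : 0 ≤ ε) (hk'M : g * k' ≤ M)
    (hσε : c * σ * (g * K) ≤ 2 * √M * ε) :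
    √g * (√(g * σ ^ 2 * k') + ε) ≤ 4 * M / (c * K * √g) * ε := by
  have hM : 0 ≤ M := (mul_nonneg hg.le (hK.le.trans hKk')).trans hk'M
  have hgg : √g * √g = g := Real.mul_self_sqrt hg.le
  have hσg : √(g * σ ^ 2 * k') = σ * √(g * k') := by
    rw [mul_comm g, mul_assoc, Real.sqrt_mul' _ (mul_nonneg hg.le (hK.le.trans hKk')),
      Real.sqrt_sq hσ]
  have hgk' : √(g * k') ≤ √M := Real.sqrt_le_sqrt hk'M
  have hMM : √M * √M = M := Real.mul_self_sqrt hM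
  have h1 : c * σ * (g * K) * √(g * k') ≤ 2 * M * ε := by
    calc c * σ * (g * K) * √(g * k') ≤ 2 * √M * ε * √M := by gcongr
      _ = 2 * M * ε := by linear_combination (2 * ε) * hMM
  have h2 : g * c * K * ε ≤ M * ε := by
    gcongr
    calc g * c * K ≤ g * 1 * k' := by gcongr
      _ ≤ M := by linarith
  rw [div_mul_eq_mul_div, le_div_iff₀ (by positivity), hσg]
  calc √g * (σ * √(g * k') + ε) * (c * K * √g)
      = c * σ * (g * K) * √(g * k') + g * c * K * ε := by
          linear_combination (c * K * (σ * √(g * k') + ε)) * hgg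
    _ ≤ 4 * M * ε := by nlinarith

theorem stmt_19_general {n m : ℕ} (hnm : n < m) (A : Matrix (Fin n) (Fin m) ℝ)
    (hURP : URP A) (horth : A * A.transpose = 1)
    (n0 : ℕ) (hn0 : n0 ≤ n)
    (γ : ℝ) (hγ : γ = gammaA A n0) (hγpos : 0 < γ) (hbdd : BddAbove (gammaSet A n0))
    (ε : ℝ)
    (s0 : Fin m → ℝ) (k : ℕ) (hk : k = l0 s0)
    (k' : ℝ) (hk'1 : (k : ℝ) < k') (hk'2 : k' < n0 / (2 + 2 * γ))
    (x : Fin n → ℝ) (hx : Real.sqrt (nsq (A.mulVec s0 - x)) < ε)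
    (c : ℝ) (hc : c = 2 * m / (2 * m + n0 / (2 + 2 * γ) - k'))
    (σJ : ℝ) (hσJpos : 0 < σJ)
    (hσJ2 : c * σJ < 2 * Real.sqrt m * Real.sqrt (sMaxSq A) * ε / ((1 + γ) * (k' - k)))
    (sJ : Fin m → ℝ) (hsJx : A.mulVec sJ = x)
    (hFsJ : (m : ℝ) - k' ≤ Fsp γ σJ sJ) :
    Real.sqrt (nsq (sJ - s0)) ≤
      (4 * m / (c * (k' - k) * Real.sqrt (γ + 1)) + 1) * Real.sqrt (sMaxSq A) * ε := by
  have hε : 0 < ε := (Real.sqrt_nonneg _).trans_lt hx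
  have hK : (0 : ℝ) < k' - k := sub_pos.mpr hk'1
  have hk' : 0 < k' := (Nat.cast_nonneg k).trans_lt hk'1
  have hk'n0 : 2 * ((1 + γ) * k') < n0 := by
    rw [lt_div_iff₀ (by positivity)] at hk'2
    linarith
  have hm : (0 : ℝ) < m := by exact_mod_cast (Nat.zero_le n).trans_lt hnm
  have hn0m : (n0 : ℝ) ≤ m := by exact_mod_cast hn0.trans hnm.le
  have : Nonempty (Fin n) := Fin.pos_iff_nonempty.mp <| hn0.trans_lt' <| by
    exact_mod_cast (by positivity : (0 : ℝ) < 2 * ((1 + γ) * k')).trans hk'n0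
  have hA : √(sMaxSq A) = 1 := by rw [sMaxSq_eq_one horth, Real.sqrt_one]
  rw [hA, mul_one, lt_div_iff₀ (by positivity)] at hσJ2
  rw [hA, mul_one, add_comm γ]
  obtain ⟨I, hIcard, hs0I, hsJI⟩ := exists_support_of_le_Fsp hγpos.le hσJpos hFsJ s0
  have hI : I.card ≤ n0 := by
    rw [← hk] at hIcard
    exact_mod_cast (by nlinarith : (I.card : ℝ) ≤ n0)
  have hAd : √(nsq (A *ᵥ (sJ - s0))) ≤ ε := by
    rw [mulVec_sub, hsJx, nsq_sub_comm]
    exact hx.le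
  have hD : 2 * m < 2 * m + n0 / (2 + 2 * γ) - k' := by linarith
  have hc0 : 0 < c := hc ▸ div_pos (by linarith) (by linarith)
  have hc1 : c ≤ 1 := hc ▸ (div_le_one (by linarith)).mpr hD.le
  calc √(nsq (sJ - s0)) ≤ √(1 + γ) * (√((1 + γ) * σJ ^ 2 * k') + ε) + ε := by
        rw [hγ] at hsJI ⊢
        exact sqrt_nsq_sub_le_of_compl_le hURP horth hnm.le hn0 hbdd hI hs0I
          (Real.sqrt_le_sqrt hsJI) hAd
    _ ≤ 4 * m / (c * (k' - k) * √(1 + γ)) * ε + ε := by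
        gcongr ?_ + _
        exact sqrt_mul_sqrt_add_le_div (by positivity) hK (by linarith) hc0 hc1 hσJpos.le hε.le
          (by linarith) (by linarith)
    _ = (4 * m / (c * (k' - k) * √(1 + γ)) + 1) * ε := by ring

/-- noisy case: if ‖As0 − x‖ < ε, σ_J satisfies
σ_J ≥ 2√m‖A‖₂ε/((1+γ)(k′−k)) > cσ_J, and s_J ∈ S_x satisfies F_{γ,σ_J}(s_J) ≥ m − k′,
then ‖s_J − s0‖ ≤ Cε with C = (4m/(c(k′−k)√(γ+1)) + 1)‖A‖₂. -/
theorem stmt_19 {n m : ℕ} (hnm : n < m) (A : Matrix (Fin n) (Fin m) ℝ)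
    (hURP : URP A) (horth : A * A.transpose = 1)
    (n0 : ℕ) (hn1 : 1 ≤ n0) (hn0 : n0 ≤ n)
    (γ : ℝ) (hγ : γ = gammaA A n0) (hγpos : 0 < γ) (hbdd : BddAbove (gammaSet A n0))
    (ε : ℝ) (hε : 0 < ε)
    (s0 : Fin m → ℝ) (k : ℕ) (hk : k = l0 s0)
    (k' : ℝ) (hk'1 : (k : ℝ) < k') (hk'2 : k' < n0 / (2 + 2 * γ))
    (x : Fin n → ℝ) (hx : Real.sqrt (nsq (A.mulVec s0 - x)) < ε)
    (c : ℝ) (hc : c = 2 * m / (2 * m + n0 / (2 + 2 * γ) - k'))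
    (σJ : ℝ) (hσJpos : 0 < σJ)
    (hσJ1 : 2 * Real.sqrt m * Real.sqrt (sMaxSq A) * ε / ((1 + γ) * (k' - k)) ≤ σJ)
    (hσJ2 : c * σJ < 2 * Real.sqrt m * Real.sqrt (sMaxSq A) * ε / ((1 + γ) * (k' - k)))
    (sJ : Fin m → ℝ) (hsJx : A.mulVec sJ = x)
    (hFsJ : (m : ℝ) - k' ≤ Fsp γ σJ sJ) :
    Real.sqrt (nsq (sJ - s0)) ≤
      (4 * m / (c * (k' - k) * Real.sqrt (γ + 1)) + 1) * Real.sqrt (sMaxSq A) * ε :=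
  stmt_19_general hnm A hURP horth n0 hn0 γ hγ hγpos hbdd ε s0 k hk k' hk'1 hk'2 x hx c hc σJ hσJpos
    hσJ2 sJ hsJx hFsJ
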